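/- Let ν be a partition with ℓ removable corners, of weights R_1,…,R_ℓ, and ℓ+1 addable corners, of weights A_0,…,A_ℓ; set d_j = (1/A_j)·∏_{i=1}^{ℓ}(1 − qt·R_i/A_j) / ∏_{0≤i≤ℓ, i≠j}(1 − A_i/A_j) and P(y) = ∏_{i=1}^{ℓ}(1 − qt·R_i·y)/∏_{j=0}^{ℓ}(1 − A_j·y) ∈ ℚ(q,t)[[y]]. Then for every integer k ≥ 1: Σ_{j=0}^{ℓ} d_j·A_j^k·(B_ν + A_j) = B_ν·([y^{k−1}]P) + ([y^k]P), where [y^m]P denotes the coefficient of y^m in P. (This is the identity Σ_{γ←ν} d_{γν}(T_γ/T_ν)^k·B_γ = (−1)^{k−1}B_ν·e_{k−1}[D_ν] + (−1)^k·e_k[D_ν] used in the proof of the eigenoperator theorem for Q_{m,0}.) -/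

import Mathlib

/-!
The weights `w` are pairwise distinct and nonzero, and a partition has one more addable than
removable corner, so `P = N / D` with `deg N < deg D` and `D = ∏ⱼ (1 - Aⱼ y)` having distinct
simple roots. Partial fractions give `P = ∑ⱼ dⱼ Aⱼ / (1 - Aⱼ y)`, that is
`[y^m] P = ∑ⱼ dⱼ Aⱼ^(m+1)`, and the identity then holds term by term:
`dⱼ Aⱼ^k (B + Aⱼ) = B · dⱼ Aⱼ^k + dⱼ Aⱼ^(k+1)`.
-/

open scoped Classical
open PowerSeries

noncomputable section

abbrev K := FractionRing (MvPolynomial (Fin 2) ℚ)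

def q : K := algebraMap (MvPolynomial (Fin 2) ℚ) K (MvPolynomial.X 0)
def t : K := algebraMap (MvPolynomial (Fin 2) ℚ) K (MvPolynomial.X 1)

/-- the weight of a cell `(i,j)` (row `i`, column `j`) is `t^i * q^j` -/
def w (c : ℕ × ℕ) : K := t ^ c.1 * q ^ c.2

/-- `B_μ = Σ_{c ∈ μ} w(c)` -/
def Bsum (μ : YoungDiagram) : K := ∑ c ∈ μ.cells, w c

/-- a removable corner: a cell of `μ` whose removal leaves a Young diagram -/
def IsRemovable (μ : YoungDiagram) (c : ℕ × ℕ) : Prop :=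
  c ∈ μ ∧ IsLowerSet (↑(μ.cells.erase c) : Set (ℕ × ℕ))

/-- an addable corner: a cell not in `μ` whose addition gives a Young diagram -/
def IsAddable (μ : YoungDiagram) (c : ℕ × ℕ) : Prop :=
  c ∉ μ ∧ IsLowerSet (↑(insert c μ.cells) : Set (ℕ × ℕ))

/-- the arm of a cell: number of cells of `μ` strictly east of it in its row -/
def arm (μ : YoungDiagram) (c : ℕ × ℕ) : ℕ :=
  (μ.cells.filter fun d => d.1 = c.1 ∧ c.2 < d.2).card

/-- the leg of a cell: number of cells of `μ` strictly north of it in its column -/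
def leg (μ : YoungDiagram) (c : ℕ × ℕ) : ℕ :=
  (μ.cells.filter fun d => d.2 = c.2 ∧ c.1 < d.1).card

namespace Polynomial

variable {F ι : Type*} [Field F]

lemma natDegree_prod_one_sub_C_mul_X_le (s : Finset ι) (β : ι → F) :
    (∏ i ∈ s, (1 - C (β i) * X)).natDegree ≤ s.card := by
  refine (natDegree_prod_le _ _).trans ?_
  refine (Finset.sum_le_card_nsmul _ _ 1 fun i _ => ?_).trans (by simp)
  exact (natDegree_sub_le _ _).trans
    (max_le (by simp) (by simpa using natDegree_C_mul_X_pow_le (β i) 1))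

variable [DecidableEq ι]

lemma eval_inv_prod_erase_one_sub_C_mul_X {s : Finset ι} {α : ι → F} {i k : ι} (hk : k ∈ s)
    (hk0 : α k ≠ 0) :
    (∏ j ∈ s.erase i, (1 - C (α j) * X)).eval (α k)⁻¹ =
      if k = i then ∏ j ∈ s.erase i, (1 - α j / α i) else 0 := by
  simp only [eval_prod, eval_sub, eval_one, eval_mul, eval_C, eval_X, ← div_eq_mul_inv]
  split_ifs with hki
  · rw [hki]
  · exact Finset.prod_eq_zero (Finset.mem_erase.mpr ⟨hki, hk⟩) (by rw [div_self hk0, sub_self])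

/-- The coefficient of `1 / (1 - α i X)` in the partial fraction expansion of
`N / ∏ j ∈ s, (1 - α j X)`. -/
def partialFractionCoeff (s : Finset ι) (α : ι → F) (N : F[X]) (i : ι) : F :=
  N.eval (α i)⁻¹ / ∏ j ∈ s.erase i, (1 - α j / α i)

theorem eq_sum_C_partialFractionCoeff_mul_prod_erase {s : Finset ι} {α : ι → F}
    (hα : Set.InjOn α s) (hα0 : ∀ i ∈ s, α i ≠ 0) {N : F[X]} (hN : N.natDegree < s.card) :
    N = ∑ i ∈ s, C (partialFractionCoeff s α N i) * ∏ j ∈ s.erase i, (1 - C (α j) * X) := by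
  have hden : ∀ i ∈ s, ∏ j ∈ s.erase i, (1 - α j / α i) ≠ 0 := by
    refine fun i hi => Finset.prod_ne_zero_iff.mpr fun j hj h => ?_
    rw [sub_eq_zero, eq_comm, div_eq_one_iff_eq (hα0 i hi)] at h
    exact (Finset.mem_erase.mp hj).1 (hα (Finset.mem_of_mem_erase hj) hi h)
  have hinv : Set.InjOn (fun i => (α i)⁻¹) s := fun i hi j hj h => hα hi hj (inv_injective h)
  refine eq_of_natDegree_lt_card_of_eval_eq' _ _ (s.image fun i => (α i)⁻¹) ?_ ?_
  · simp only [Finset.mem_image, forall_exists_index, and_imp, forall_apply_eq_imp_iff₂]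
    intro k hk
    simp only [eval_finsetSum, eval_mul, eval_C,
      eval_inv_prod_erase_one_sub_C_mul_X hk (hα0 k hk), mul_ite, mul_zero,
      Finset.sum_ite_eq, if_pos hk, partialFractionCoeff]
    exact (div_mul_cancel₀ _ (hden k hk)).symm
  · rw [Finset.card_image_of_injOn hinv, max_lt_iff]
    refine ⟨hN, (natDegree_sum_le_of_forall_le (n := s.card - 1) _ _ fun i hi => ?_).trans_lt
      (by omega)⟩
    exact (natDegree_C_mul_le _ _).trans
      ((natDegree_prod_one_sub_C_mul_X_le _ _).trans_eq (Finset.card_erase_of_mem hi))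

end Polynomial

namespace PowerSeries

lemma one_sub_C_mul_X_mul_rescale_mk_one {R : Type*} [CommRing R] (a : R) :
    (1 - C a * X) * rescale a (mk 1) = 1 := by
  simpa [rescale_X, mul_comm] using congrArg (rescale a) (mk_one_mul_one_sub_eq_one (S := R))

variable {F ι : Type*} [Field F] [DecidableEq ι]

theorem coeff_coe_mul_inv_prod_one_sub_C_mul_X {s : Finset ι} {α : ι → F}
    (hα : Set.InjOn α s) (hα0 : ∀ i ∈ s, α i ≠ 0) {N : Polynomial F} (hN : N.natDegree < s.card)
    (m : ℕ) :
    coeff m ((N : F⟦X⟧) * (∏ i ∈ s, (1 - C (α i) * X))⁻¹) =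
      ∑ i ∈ s, Polynomial.partialFractionCoeff s α N i * α i ^ m := by
  have hD : constantCoeff (∏ i ∈ s, (1 - C (α i) * X)) ≠ 0 := by simp [map_prod]
  have hexpand : (N : F⟦X⟧) * (∏ i ∈ s, (1 - C (α i) * X))⁻¹ =
      ∑ i ∈ s, C (Polynomial.partialFractionCoeff s α N i) * rescale (α i) (mk 1) := by
    rw [eq_comm, eq_mul_inv_iff_mul_eq hD, Finset.sum_mul]
    conv_rhs => rw [Polynomial.eq_sum_C_partialFractionCoeff_mul_prod_erase hα hα0 hN]
    rw [← Polynomial.coeToPowerSeries.ringHom_apply]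
    simp only [map_sum, map_mul, map_prod, map_sub, map_one,
      Polynomial.coeToPowerSeries.ringHom_apply, Polynomial.coe_C, Polynomial.coe_X]
    refine Finset.sum_congr rfl fun i hi => ?_
    rw [← Finset.mul_prod_erase s _ hi, mul_assoc, ← mul_assoc (rescale _ _),
      mul_comm (rescale _ _), one_sub_C_mul_X_mul_rescale_mk_one, one_mul]
  rw [hexpand, map_sum]
  simp only [coeff_C_mul, coeff_rescale, coeff_mk, Pi.one_apply, mul_one]

end PowerSeries

lemma q_ne_zero : q ≠ 0 :=
  (map_ne_zero_iff _ (IsFractionRing.injective _ K)).mpr (MvPolynomial.X_ne_zero 0)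

lemma t_ne_zero : t ≠ 0 :=
  (map_ne_zero_iff _ (IsFractionRing.injective _ K)).mpr (MvPolynomial.X_ne_zero 1)

lemma w_ne_zero (c : ℕ × ℕ) : w c ≠ 0 :=
  mul_ne_zero (pow_ne_zero _ t_ne_zero) (pow_ne_zero _ q_ne_zero)

lemma w_eq_algebraMap_monomial (c : ℕ × ℕ) :
    w c = algebraMap (MvPolynomial (Fin 2) ℚ) K
      (MvPolynomial.monomial (Finsupp.single 1 c.1 + Finsupp.single 0 c.2) 1) := by
  rw [w, q, t, ← map_pow, ← map_pow, ← map_mul, MvPolynomial.X_pow_eq_monomial,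
    MvPolynomial.X_pow_eq_monomial, MvPolynomial.monomial_mul, one_mul]

lemma w_injective : Function.Injective w := by
  intro c c' h
  simp only [w_eq_algebraMap_monomial] at h
  have hexp := MvPolynomial.monomial_left_injective one_ne_zero
    (IsFractionRing.injective (MvPolynomial (Fin 2) ℚ) K h)
  have h1 := DFunLike.congr_fun hexp 1
  have h0 := DFunLike.congr_fun hexp 0
  simp at h0 h1
  exact Prod.ext h1 h0

lemma IsRemovable.notMem_of_lt {ν : YoungDiagram} {c c' : ℕ × ℕ} (h : IsRemovable ν c)
    (hlt : c < c') : c' ∉ ν := fun hc' => by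
  have hmem : c' ∈ (↑(ν.cells.erase c) : Set (ℕ × ℕ)) := by simp [hlt.ne', hc']
  simpa using h.2 hlt.le hmem

lemma IsRemovable.rowLen_eq {ν : YoungDiagram} {c : ℕ × ℕ} (h : IsRemovable ν c) :
    ν.rowLen c.1 = c.2 + 1 := by
  have hc := YoungDiagram.mem_iff_lt_rowLen.mp h.1
  have hnext := mt YoungDiagram.mem_iff_lt_rowLen.mpr
    (h.notMem_of_lt (c' := (c.1, c.2 + 1)) (Prod.lt_of_le_of_lt le_rfl (Nat.lt_succ_self _)))
  omega

lemma IsRemovable.rowLen_succ_le {ν : YoungDiagram} {c : ℕ × ℕ} (h : IsRemovable ν c) :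
    ν.rowLen (c.1 + 1) ≤ c.2 :=
  not_lt.mp <| mt YoungDiagram.mem_iff_lt_rowLen.mpr
    (h.notMem_of_lt (c' := (c.1 + 1, c.2)) (Prod.lt_of_lt_of_le (Nat.lt_succ_self _) le_rfl))

lemma isAddable_rowLen (ν : YoungDiagram) (i : ℕ)
    (hlt : ∀ x < i, ν.rowLen i < ν.rowLen x) : IsAddable ν (i, ν.rowLen i) := by
  refine ⟨fun h => (YoungDiagram.mem_iff_lt_rowLen.mp h).false, fun a b hba ha => ?_⟩
  simp only [Finset.coe_insert, Set.mem_insert_iff, Finset.mem_coe,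
    YoungDiagram.mem_cells] at ha ⊢
  rcases ha with rfl | ha
  · obtain ⟨b1, b2⟩ := b
    obtain ⟨hb1, hb2⟩ := Prod.mk_le_mk.mp hba
    rcases hb1.lt_or_eq with hb1 | rfl
    · exact Or.inr (YoungDiagram.mem_iff_lt_rowLen.mpr (hb2.trans_lt (hlt b1 hb1)))
    · rcases hb2.lt_or_eq with hb2 | rfl
      · exact Or.inr (YoungDiagram.mem_iff_lt_rowLen.mpr hb2)
      · exact Or.inl rfl
  · exact Or.inr (ν.isLowerSet hba ha)

theorem card_lt_card_of_isRemovable_of_isAddable (ν : YoungDiagram) (Rem Add : Finset (ℕ × ℕ))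
    (hRem : ∀ x, x ∈ Rem ↔ IsRemovable ν x) (hAdd : ∀ x, x ∈ Add ↔ IsAddable ν x) :
    Rem.card < Add.card := by
  -- Removable `c` goes to the addable cell ending row `c.1 + 1`; the one ending row `0` is missed.
  have h0 : (0, ν.rowLen 0) ∈ Add := (hAdd _).mpr (isAddable_rowLen ν 0 (by simp))
  refine (Finset.card_le_card_of_injOn (fun c => (c.1 + 1, ν.rowLen (c.1 + 1))) ?_ ?_).trans_lt
    (Finset.card_erase_lt_of_mem h0)
  · intro c hc
    have hc := (hRem c).mp hc
    refine Finset.mem_erase.mpr ⟨by simp, (hAdd _).mpr (isAddable_rowLen ν _ fun x hx => ?_)⟩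
    calc ν.rowLen (c.1 + 1) ≤ c.2 := hc.rowLen_succ_le
      _ < ν.rowLen c.1 := by rw [hc.rowLen_eq]; exact Nat.lt_succ_self _
      _ ≤ ν.rowLen x := ν.rowLen_anti _ _ (Nat.lt_succ_iff.mp hx)
  · intro c hc c' hc' heq
    have h1 : c.1 = c'.1 := by simpa using congrArg Prod.fst heq
    have e := ((hRem c).mp hc).rowLen_eq
    have e' := ((hRem c').mp hc').rowLen_eq
    rw [h1] at e
    exact Prod.ext h1 (by omega)

/-- the identity
`Σ_j d_j·A_j^k·(B_ν + A_j) = B_ν·[y^{k−1}]P + [y^k]P`, i.e.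
`Σ_{γ←ν} d_{γν}(T_γ/T_ν)^k·B_γ = (−1)^{k−1}B_ν·e_{k−1}[D_ν] + (−1)^k·e_k[D_ν]`. -/
theorem stmt_12 (ν : YoungDiagram) (Rem Add : Finset (ℕ × ℕ))
    (hRem : ∀ x, x ∈ Rem ↔ IsRemovable ν x)
    (hAdd : ∀ x, x ∈ Add ↔ IsAddable ν x)
    (d : (ℕ × ℕ) → K)
    (hd : ∀ a ∈ Add, d a =
      (w a)⁻¹ * (∏ r ∈ Rem, (1 - q * t * w r / w a)) /
        ∏ a' ∈ Add.erase a, (1 - w a' / w a))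
    (P : PowerSeries K)
    (hP : P = (∏ r ∈ Rem, (1 - C (q * t * w r) * X)) *
      (∏ a ∈ Add, (1 - C (w a) * X))⁻¹) :
    ∀ k : ℕ, 1 ≤ k →
      (∑ a ∈ Add, d a * w a ^ k * (Bsum ν + w a)) =
        Bsum ν * coeff (k - 1) P + coeff k P := by
  set N : Polynomial K := ∏ r ∈ Rem, (1 - Polynomial.C (q * t * w r) * Polynomial.X)
  have hPN : P = (N : K⟦X⟧) * (∏ a ∈ Add, (1 - C (w a) * X))⁻¹ := by
    rw [hP, ← Polynomial.coeToPowerSeries.ringHom_apply]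
    simp only [N, map_prod, map_sub, map_one, map_mul,
      Polynomial.coeToPowerSeries.ringHom_apply, Polynomial.coe_C, Polynomial.coe_X]
  have hN : N.natDegree < Add.card := (Polynomial.natDegree_prod_one_sub_C_mul_X_le _ _).trans_lt
    (card_lt_card_of_isRemovable_of_isAddable ν Rem Add hRem hAdd)
  have hcoeff (m : ℕ) :
      coeff m P = ∑ a ∈ Add, Polynomial.partialFractionCoeff Add w N a * w a ^ m := by
    rw [hPN]
    exact coeff_coe_mul_inv_prod_one_sub_C_mul_X w_injective.injOn (fun a _ => w_ne_zero a) hN m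
  have hdN : ∀ a ∈ Add, d a = (w a)⁻¹ * Polynomial.partialFractionCoeff Add w N a := by
    intro a ha
    rw [hd a ha, mul_div_assoc, Polynomial.partialFractionCoeff]
    congr 2
    simp [N, Polynomial.eval_prod, div_eq_mul_inv]
  rintro (_ | k) hk
  · omega
  rw [Nat.add_sub_cancel, hcoeff, hcoeff, Finset.mul_sum, ← Finset.sum_add_distrib]
  refine Finset.sum_congr rfl fun a ha => ?_
  rw [hdN a ha]
  field_simp [w_ne_zero a]
  ring

end
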